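/- arXiv:1607.00473 — 3 statements merged into one kernel-verified Lean document; each statement's English description precedes it below -/
import Mathlib

section
/- Let G be a connected bipartite simple graph on n vertices with maximum degree Δ ≤ n−2, and let S = Σ_{i=1}^n Tr_G(v_i). For every vertex v of G with deg(v) = Δ, putting D_v = Tr_G(v), a = (Δ+1)(S − 2D_v − 2 t_v Δ) + 2nΔ² and b = D_v² − 2SΔ² + 2 D_v t_v Δ + t_v² Δ², one has S_𝒟(G) ≥ √(a² + 4b(1+Δ)(n−Δ−1)) / ((1+Δ)(n−Δ−1)). -/
open Finset Matrix

noncomputable def distMatrix {V : Type*} [Fintype V] (G : SimpleGraph V) : Matrix V V ℝ :=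
  Matrix.of fun u v => (G.dist u v : ℝ)

theorem distMatrix_isHermitian {V : Type*} [Fintype V] (G : SimpleGraph V) :
    (distMatrix G).IsHermitian := by
  show (distMatrix G)ᴴ = distMatrix G
  ext i j
  simp [distMatrix, Matrix.conjTranspose_apply, SimpleGraph.dist_comm]

noncomputable def transmission {V : Type*} [Fintype V] (G : SimpleGraph V) (v : V) : ℝ :=
  ∑ u, (G.dist v u : ℝ)

noncomputable def distSLMatrix {V : Type*} [Fintype V] [DecidableEq V] (G : SimpleGraph V) :
    Matrix V V ℝ :=
  Matrix.diagonal (transmission G) + distMatrix G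

theorem distSLMatrix_isHermitian {V : Type*} [Fintype V] [DecidableEq V] (G : SimpleGraph V) :
    (distSLMatrix G).IsHermitian :=
  (Matrix.isHermitian_diagonal _).add (distMatrix_isHermitian G)

noncomputable def maxEig {V : Type*} [Fintype V] [DecidableEq V] {A : Matrix V V ℝ}
    (hA : A.IsHermitian) : ℝ :=
  ⨆ i, hA.eigenvalues i

noncomputable def minEig {V : Type*} [Fintype V] [DecidableEq V] {A : Matrix V V ℝ}
    (hA : A.IsHermitian) : ℝ :=
  ⨅ i, hA.eigenvalues i

noncomputable def distSpread {V : Type*} [Fintype V] [DecidableEq V] (G : SimpleGraph V) : ℝ :=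
  maxEig (distMatrix_isHermitian G) - minEig (distMatrix_isHermitian G)

noncomputable def distSLSpread {V : Type*} [Fintype V] [DecidableEq V] (G : SimpleGraph V) : ℝ :=
  maxEig (distSLMatrix_isHermitian G) - minEig (distSLMatrix_isHermitian G)


/-!
For orthonormal `e₁, e₂` and a real symmetric `A`, rotating the pair by half the argument of
`(p - r) + 2qi`, where `!![p, q; q, r]` is the compression of `A` to `span {e₁, e₂}`, gives unit
vectors whose Rayleigh quotients differ by `√((p - r)² + 4q²)`, the eigenvalue gap of the
compression; hence the spread of `A` is at least that gap. Apply this to the distance matrix and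
the normalised indicators of the closed neighbourhood `N[v]` and of its complement: the compression
is the quotient matrix of this partition. In a bipartite graph the neighbours of `v` are pairwise
at distance `2`, so the `N[v]` block of `𝒟(G)` sums to `2Δ²`; the row sums over `N[v]` give
`D_v + t_v Δ` and the total sum is `S`, which fixes the other two blocks, and the radicand of the
claimed bound is exactly `(km)²` times the squared gap, where `k = Δ + 1` and `m = n - Δ - 1`.
-/

open scoped MatrixOrder

section Spread

variable {V : Type*} [Fintype V] {A : Matrix V V ℝ}

lemma dotProduct_mulVec_mono {B : Matrix V V ℝ} (h : A ≤ B) (x : V → ℝ) :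
    x ⬝ᵥ A *ᵥ x ≤ x ⬝ᵥ B *ᵥ x := by
  have := (Matrix.le_iff.mp h).dotProduct_mulVec_nonneg x
  rwa [star_trivial, sub_mulVec, dotProduct_sub, sub_nonneg] at this

lemma Matrix.IsHermitian.dotProduct_mulVec_comm (hA : A.IsHermitian) (x y : V → ℝ) :
    y ⬝ᵥ A *ᵥ x = x ⬝ᵥ A *ᵥ y := by
  rw [dotProduct_mulVec, dotProduct_comm, ← mulVec_transpose,
    ← conjTranspose_eq_transpose_of_trivial, hA.eq]

lemma add_smul_dotProduct_mulVec_add_smul (c s c' s' : ℝ) (x y x' y' : V → ℝ) :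
    (c • x + s • y) ⬝ᵥ A *ᵥ (c' • x' + s' • y')
      = c * c' * (x ⬝ᵥ A *ᵥ x') + c * s' * (x ⬝ᵥ A *ᵥ y') + s * c' * (y ⬝ᵥ A *ᵥ x')
        + s * s' * (y ⬝ᵥ A *ᵥ y') := by
  simp only [mulVec_add, mulVec_smul, dotProduct_add, add_dotProduct, smul_dotProduct,
    dotProduct_smul, smul_eq_mul]
  ring

variable [DecidableEq V]

lemma dotProduct_algebraMap_mulVec (c : ℝ) (x : V → ℝ) :
    x ⬝ᵥ algebraMap ℝ (Matrix V V ℝ) c *ᵥ x = c * (x ⬝ᵥ x) := by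
  rw [Algebra.algebraMap_eq_smul_one, smul_mulVec, one_mulVec, dotProduct_smul, smul_eq_mul]

lemma dotProduct_mulVec_le_maxEig (hA : A.IsHermitian) (x : V → ℝ) :
    x ⬝ᵥ A *ᵥ x ≤ maxEig hA * (x ⬝ᵥ x) := by
  have hle : A ≤ algebraMap ℝ _ (maxEig hA) := by
    refine le_algebraMap_of_spectrum_le (fun r hr => ?_) hA.isSelfAdjoint
    obtain ⟨i, rfl⟩ := hA.spectrum_real_eq_range_eigenvalues ▸ hr
    exact le_ciSup (Set.finite_range _).bddAbove i
  simpa only [dotProduct_algebraMap_mulVec] using dotProduct_mulVec_mono hle x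

lemma minEig_le_dotProduct_mulVec (hA : A.IsHermitian) (x : V → ℝ) :
    minEig hA * (x ⬝ᵥ x) ≤ x ⬝ᵥ A *ᵥ x := by
  have hle : algebraMap ℝ _ (minEig hA) ≤ A := by
    refine algebraMap_le_of_le_spectrum (fun r hr => ?_) hA.isSelfAdjoint
    obtain ⟨i, rfl⟩ := hA.spectrum_real_eq_range_eigenvalues ▸ hr
    exact ciInf_le (Set.finite_range _).bddBelow i
  simpa only [dotProduct_algebraMap_mulVec] using dotProduct_mulVec_mono hle x

lemma sub_le_maxEig_sub_minEig (hA : A.IsHermitian) {x y : V → ℝ} (hx : x ⬝ᵥ x = 1)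
    (hy : y ⬝ᵥ y = 1) : x ⬝ᵥ A *ᵥ x - y ⬝ᵥ A *ᵥ y ≤ maxEig hA - minEig hA := by
  have hmax := dotProduct_mulVec_le_maxEig hA x
  have hmin := minEig_le_dotProduct_mulVec hA y
  rw [hx, mul_one] at hmax
  rw [hy, mul_one] at hmin
  linarith

theorem sqrt_le_maxEig_sub_minEig_of_orthonormal (hA : A.IsHermitian) {e₁ e₂ : V → ℝ}
    (h₁ : e₁ ⬝ᵥ e₁ = 1) (h₂ : e₂ ⬝ᵥ e₂ = 1) (h₁₂ : e₁ ⬝ᵥ e₂ = 0) :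
    √((e₁ ⬝ᵥ A *ᵥ e₁ - e₂ ⬝ᵥ A *ᵥ e₂) ^ 2 + 4 * (e₁ ⬝ᵥ A *ᵥ e₂) ^ 2)
      ≤ maxEig hA - minEig hA := by
  set p := e₁ ⬝ᵥ A *ᵥ e₁
  set q := e₁ ⬝ᵥ A *ᵥ e₂
  set r := e₂ ⬝ᵥ A *ᵥ e₂
  set z : ℂ := ⟨p - r, 2 * q⟩
  set c := Real.cos (z.arg / 2)
  set s := Real.sin (z.arg / 2)
  have hcs : c ^ 2 + s ^ 2 = 1 := by rw [add_comm]; exact Real.sin_sq_add_cos_sq _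
  have hcos : Real.cos z.arg = c ^ 2 - s ^ 2 := by
    rw [← mul_div_cancel₀ z.arg two_ne_zero, Real.cos_two_mul]; linear_combination hcs
  have hsin : Real.sin z.arg = 2 * s * c := by
    rw [← mul_div_cancel₀ z.arg two_ne_zero, Real.sin_two_mul]
  have hnorm (a b : ℝ) : (a • e₁ + b • e₂) ⬝ᵥ (a • e₁ + b • e₂) = a ^ 2 + b ^ 2 := by
    simp only [dotProduct_add, add_dotProduct, smul_dotProduct, dotProduct_smul, smul_eq_mul,
      h₁, h₂, h₁₂, dotProduct_comm e₂ e₁]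
    ring
  have hrot : (c • e₁ + s • e₂) ⬝ᵥ A *ᵥ (c • e₁ + s • e₂)
      - ((-s) • e₁ + c • e₂) ⬝ᵥ A *ᵥ ((-s) • e₁ + c • e₂) = ‖z‖ := by
    have hre : ‖z‖ * (c ^ 2 - s ^ 2) = p - r := hcos ▸ Complex.norm_mul_cos_arg z
    have him : ‖z‖ * (2 * s * c) = 2 * q := hsin ▸ Complex.norm_mul_sin_arg z
    rw [add_smul_dotProduct_mulVec_add_smul, add_smul_dotProduct_mulVec_add_smul,
      hA.dotProduct_mulVec_comm e₁ e₂]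
    linear_combination -(c ^ 2 - s ^ 2) * hre - (2 * s * c) * him + ‖z‖ * (c ^ 2 + s ^ 2 + 1) * hcs
  calc √((p - r) ^ 2 + 4 * q ^ 2) = ‖z‖ := by
        rw [Complex.norm_eq_sqrt_sq_add_sq, show z.re = p - r from rfl, show z.im = 2 * q from rfl]
        ring_nf
    _ ≤ maxEig hA - minEig hA :=
        hrot ▸ sub_le_maxEig_sub_minEig hA ((hnorm c s).trans hcs)
          ((hnorm (-s) c).trans (by linear_combination hcs))

theorem sqrt_le_maxEig_sub_minEig_of_orthogonal (hA : A.IsHermitian) {x y : V → ℝ}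
    (hx : 0 < x ⬝ᵥ x) (hy : 0 < y ⬝ᵥ y) (hxy : x ⬝ᵥ y = 0) :
    √(((y ⬝ᵥ y) * (x ⬝ᵥ A *ᵥ x) - (x ⬝ᵥ x) * (y ⬝ᵥ A *ᵥ y)) ^ 2
        + 4 * (x ⬝ᵥ x) * (y ⬝ᵥ y) * (x ⬝ᵥ A *ᵥ y) ^ 2) / ((x ⬝ᵥ x) * (y ⬝ᵥ y))
      ≤ maxEig hA - minEig hA := by
  set α := x ⬝ᵥ x
  set β := y ⬝ᵥ y
  have hunit {u : V → ℝ} (hu : 0 < u ⬝ᵥ u) : ((√(u ⬝ᵥ u))⁻¹ • u) ⬝ᵥ ((√(u ⬝ᵥ u))⁻¹ • u) = 1 := by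
    rw [smul_dotProduct, dotProduct_smul, smul_smul, smul_eq_mul, ← mul_inv,
      Real.mul_self_sqrt hu.le, inv_mul_cancel₀ hu.ne']
  have h := sqrt_le_maxEig_sub_minEig_of_orthonormal hA (hunit hx) (hunit hy)
    (by rw [smul_dotProduct, dotProduct_smul, hxy, smul_zero, smul_zero])
  simp only [mulVec_smul, smul_dotProduct, dotProduct_smul, smul_eq_mul] at h
  convert h using 1
  rw [← Real.sqrt_sq (mul_pos hx hy).le, ← Real.sqrt_div' _ (by positivity)]
  congr 1
  field_simp
  rw [Real.sq_sqrt hx.le, Real.sq_sqrt hy.le]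
  field_simp

end Spread

section BlockSum

variable {V : Type*}

def blockSum (A : Matrix V V ℝ) (s t : Finset V) : ℝ :=
  ∑ u ∈ s, ∑ w ∈ t, A u w

lemma Matrix.IsHermitian.blockSum_comm {A : Matrix V V ℝ} (hA : A.IsHermitian) (s t : Finset V) :
    blockSum A t s = blockSum A s t := by
  refine Finset.sum_comm.trans (Finset.sum_congr rfl fun u _ => Finset.sum_congr rfl fun w _ => ?_)
  simpa using hA.apply u w

variable [Fintype V] [DecidableEq V]

lemma indicator_dotProduct_mulVec_indicator (A : Matrix V V ℝ) (s t : Finset V) :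
    (fun u => if u ∈ s then (1 : ℝ) else 0) ⬝ᵥ A *ᵥ (fun w => if w ∈ t then 1 else 0)
      = blockSum A s t := by
  simp [dotProduct, mulVec, blockSum, Finset.sum_ite_mem]

lemma indicator_dotProduct_indicator (s t : Finset V) :
    (fun u => if u ∈ s then (1 : ℝ) else 0) ⬝ᵥ (fun w => if w ∈ t then 1 else 0)
      = #(s ∩ t) := by
  simp only [dotProduct, mul_ite, mul_one, mul_zero, ← ite_and, ← Finset.mem_inter]
  rw [Finset.sum_boole, Finset.filter_mem_eq_inter, Finset.univ_inter, Finset.inter_comm]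

theorem sqrt_le_maxEig_sub_minEig_of_blockSum {A : Matrix V V ℝ} (hA : A.IsHermitian)
    {s : Finset V} (hs : s.Nonempty) (hsc : sᶜ.Nonempty) :
    √((#sᶜ * blockSum A s s - #s * blockSum A sᶜ sᶜ) ^ 2
        + 4 * #s * #sᶜ * blockSum A s sᶜ ^ 2) / (#s * #sᶜ)
      ≤ maxEig hA - minEig hA := by
  have h := sqrt_le_maxEig_sub_minEig_of_orthogonal hA
    (x := fun u => if u ∈ s then 1 else 0) (y := fun u => if u ∈ sᶜ then 1 else 0)
  simp only [indicator_dotProduct_mulVec_indicator, indicator_dotProduct_indicator,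
    Finset.inter_self, Finset.inter_compl, Finset.card_empty, Nat.cast_zero, Nat.cast_pos,
    Finset.card_pos] at h
  exact h hs hsc trivial

lemma blockSum_add_blockSum_compl (A : Matrix V V ℝ) (s t : Finset V) :
    blockSum A s t + blockSum A s tᶜ = ∑ u ∈ s, ∑ w, A u w := by
  simp only [blockSum, ← Finset.sum_add_distrib, Finset.sum_add_sum_compl]

lemma Matrix.IsHermitian.sum_sum_eq_blockSum {A : Matrix V V ℝ} (hA : A.IsHermitian)
    (s : Finset V) :
    ∑ u, ∑ w, A u w = blockSum A s s + 2 * blockSum A s sᶜ + blockSum A sᶜ sᶜ := by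
  rw [← Finset.sum_add_sum_compl s, ← blockSum_add_blockSum_compl, ← blockSum_add_blockSum_compl,
    compl_compl, hA.blockSum_comm s sᶜ]
  ring

end BlockSum

section Graph

variable {V : Type*} {G : SimpleGraph V}

lemma SimpleGraph.dist_eq_two_of_adj_of_adj (hG : G.Colorable 2) {v u w : V} (hu : G.Adj v u)
    (hw : G.Adj v w) (huw : u ≠ w) : G.dist u w = 2 := by
  have hle : G.dist u w ≤ 2 := dist_le (.cons hu.symm (.cons hw .nil))
  have hne0 : G.dist u w ≠ 0 :=
    fun h => huw ((hu.symm.reachable.trans hw.reachable).dist_eq_zero_iff.mp h)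
  have hne1 : G.dist u w ≠ 1 := by
    rw [Ne, dist_eq_one_iff_adj]
    intro huw'
    obtain ⟨c⟩ := hG
    have : ∀ a b c : Fin 2, a ≠ b → a ≠ c → b ≠ c → False := by decide
    exact this _ _ _ (c.valid hu) (c.valid hw) (c.valid huw')
  omega

variable [Fintype V] [DecidableEq V] [DecidableRel G.Adj]

lemma SimpleGraph.sum_dist_neighborFinset (hG : G.Colorable 2) {v u : V} (hu : G.Adj v u) :
    ∑ w ∈ G.neighborFinset v, (G.dist u w : ℝ) = 2 * G.degree v - 2 := by
  have h (w) (hw : w ∈ G.neighborFinset v) : (G.dist u w : ℝ) = 2 - if u = w then 2 else 0 := by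
    split_ifs with huw
    · simp [huw]
    · rw [G.dist_eq_two_of_adj_of_adj hG hu ((G.mem_neighborFinset v w).mp hw) huw]; norm_num
  rw [Finset.sum_congr rfl h, Finset.sum_sub_distrib, Finset.sum_ite_eq,
    if_pos ((G.mem_neighborFinset v u).mpr hu), Finset.sum_const, G.card_neighborFinset_eq_degree,
    nsmul_eq_mul, mul_comm]

lemma blockSum_distMatrix_insert_neighborFinset (hG : G.Colorable 2) (v : V) :
    blockSum (distMatrix G) (insert v (G.neighborFinset v)) (insert v (G.neighborFinset v))
      = 2 * G.degree v ^ 2 := by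
  have hv : v ∉ G.neighborFinset v := G.notMem_neighborFinset_self v
  have hdist (u) (hu : u ∈ G.neighborFinset v) : (G.dist v u : ℝ) = 1 := by
    rw [SimpleGraph.dist_eq_one_iff_adj.mpr ((G.mem_neighborFinset v u).mp hu), Nat.cast_one]
  simp only [blockSum, distMatrix, Matrix.of_apply, Finset.sum_insert hv]
  have hrow (u) (hu : u ∈ G.neighborFinset v) :
      (G.dist u v : ℝ) + ∑ w ∈ G.neighborFinset v, (G.dist u w : ℝ) = 2 * G.degree v - 1 := by
    rw [G.dist_comm, hdist u hu, G.sum_dist_neighborFinset hG ((G.mem_neighborFinset v u).mp hu)]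
    ring
  rw [Finset.sum_congr rfl hrow, Finset.sum_congr rfl hdist, SimpleGraph.dist_self]
  simp only [Finset.sum_const, G.card_neighborFinset_eq_degree, nsmul_eq_mul]
  push_cast
  ring

end Graph

theorem stmt1_general {V : Type*} [Fintype V] [DecidableEq V] (G : SimpleGraph V) [DecidableRel G.Adj]
    (hbip : G.Colorable 2)
    (n : ℕ) (hn : n = Fintype.card V)
    (Δ : ℕ) (hΔn : Δ + 2 ≤ n)
    (S : ℝ) (hS : S = ∑ u, transmission G u)
    (v : V) (hv : G.degree v = Δ)
    (Dv tv a b : ℝ)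
    (hDv : Dv = transmission G v)
    (htv : tv = (∑ u ∈ G.neighborFinset v, transmission G u) / Δ)
    (ha : a = (Δ + 1) * (S - 2*Dv - 2*tv*Δ) + 2*n*Δ^2)
    (hb : b = Dv^2 - 2*S*Δ^2 + 2*Dv*tv*Δ + tv^2*Δ^2) :
    Real.sqrt (a^2 + 4*b*(1 + Δ)*(n - Δ - 1)) / ((1 + Δ)*((n : ℝ) - Δ - 1)) ≤ distSpread G := by
  set N := insert v (G.neighborFinset v)
  have hvN : v ∉ G.neighborFinset v := G.notMem_neighborFinset_self v
  have hN : #N = Δ + 1 := by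
    rw [Finset.card_insert_of_notMem hvN, G.card_neighborFinset_eq_degree, hv]
  have hNc : (#Nᶜ : ℝ) = n - Δ - 1 := by
    rw [Finset.card_compl, hN, ← hn, Nat.cast_sub (by omega)]; push_cast; ring
  have hW : blockSum (distMatrix G) N N = 2 * Δ ^ 2 := by
    rw [blockSum_distMatrix_insert_neighborFinset hbip, hv]
  have hnbrs : ∑ u ∈ G.neighborFinset v, transmission G u = tv * Δ := by
    rw [htv, div_mul_cancel_of_imp]
    intro hΔ
    have hempty : G.neighborFinset v = ∅ := by
      rw [← Finset.card_eq_zero, G.card_neighborFinset_eq_degree, hv]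
      exact_mod_cast hΔ
    rw [hempty, Finset.sum_empty]
  have hrows : blockSum (distMatrix G) N N + blockSum (distMatrix G) N Nᶜ = Dv + tv * Δ := by
    rw [blockSum_add_blockSum_compl, Finset.sum_insert hvN, hDv, ← hnbrs]
    rfl
  have htotal : S = blockSum (distMatrix G) N N + 2 * blockSum (distMatrix G) N Nᶜ
      + blockSum (distMatrix G) Nᶜ Nᶜ :=
    hS.trans ((distMatrix_isHermitian G).sum_sum_eq_blockSum N)
  have hC : blockSum (distMatrix G) N Nᶜ = Dv + tv * Δ - 2 * Δ ^ 2 := by linarith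
  have hR : blockSum (distMatrix G) Nᶜ Nᶜ = S - 2 * (Dv + tv * Δ) + 2 * Δ ^ 2 := by linarith
  have hNc_pos : 0 < #Nᶜ := by rw [Finset.card_compl, hN, ← hn]; omega
  calc √(a ^ 2 + 4 * b * (1 + Δ) * (n - Δ - 1)) / ((1 + Δ) * ((n : ℝ) - Δ - 1))
      = √((#Nᶜ * blockSum (distMatrix G) N N - #N * blockSum (distMatrix G) Nᶜ Nᶜ) ^ 2
          + 4 * #N * #Nᶜ * blockSum (distMatrix G) N Nᶜ ^ 2) / (#N * #Nᶜ) := by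
        rw [hR, hC, hW, hNc, hN, ha, hb]
        push_cast
        congr 2 <;> ring
    _ ≤ distSpread G := sqrt_le_maxEig_sub_minEig_of_blockSum (distMatrix_isHermitian G)
        (Finset.insert_nonempty _ _) (Finset.card_pos.mp hNc_pos)

theorem stmt1 {V : Type*} [Fintype V] [DecidableEq V] (G : SimpleGraph V) [DecidableRel G.Adj]
    (hconn : G.Connected) (hbip : G.Colorable 2)
    (n : ℕ) (hn : n = Fintype.card V)
    (Δ : ℕ) (hΔ : G.maxDegree = Δ) (hΔn : Δ + 2 ≤ n)
    (S : ℝ) (hS : S = ∑ u, transmission G u)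
    (v : V) (hv : G.degree v = Δ)
    (Dv tv a b : ℝ)
    (hDv : Dv = transmission G v)
    (htv : tv = (∑ u ∈ G.neighborFinset v, transmission G u) / Δ)
    (ha : a = (Δ + 1) * (S - 2*Dv - 2*tv*Δ) + 2*n*Δ^2)
    (hb : b = Dv^2 - 2*S*Δ^2 + 2*Dv*tv*Δ + tv^2*Δ^2) :
    Real.sqrt (a^2 + 4*b*(1 + Δ)*(n - Δ - 1)) / ((1 + Δ)*((n : ℝ) - Δ - 1)) ≤ distSpread G :=
  stmt1_general G hbip n hn Δ hΔn S hS v hv Dv tv a b hDv htv ha hb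
end

section
/- Let a, b ≥ 1 be integers and n = a + b. The multiset of eigenvalues of the distance matrix 𝒟(K_{a,b}) of the complete bipartite graph K_{a,b} consists of −2 with multiplicity n−2, together with the two simple eigenvalues n−2+√(n²−3ab) and n−2−√(n²−3ab). -/
open Finset Matrix

/-!
With `U` the `(α ⊕ β) × 2` indicator matrix of the two parts and `M = !![2, 1; 1, 2]`, the distance
matrix of `K_{a,b}` is `U * M * Uᵀ - 2`. Since `(U * M * Uᵀ).charpoly = X ^ (n - 2) * (M * Uᵀ * U).charpoly`
and `M * Uᵀ * U = !![2a, b; a, 2b]` has characteristic polynomial `X² - 2nX + 3ab`, shifting by `-2`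
gives the spectrum.
-/

open Polynomial

theorem Polynomial.roots_X_sub_C_pow_mul_X_sub_C_mul_X_sub_C {R : Type*} [CommRing R] [IsDomain R]
    (c l₁ l₂ : R) (k : ℕ) :
    ((X - C c) ^ k * ((X - C l₁) * (X - C l₂))).roots = Multiset.replicate k c + {l₁, l₂} := by
  have hprod : (X - C c) ^ k * ((X - C l₁) * (X - C l₂))
      = ((Multiset.replicate k c + {l₁, l₂}).map (fun r => X - C r)).prod := by
    simp [mul_left_comm]
  rw [hprod, roots_multiset_prod_X_sub_C]

namespace SimpleGraph

variable {V : Type*} {G : SimpleGraph V} {u v : V}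

lemma dist_eq_two_iff :
    G.dist u v = 2 ↔ u ≠ v ∧ ¬G.Adj u v ∧ (G.commonNeighbors u v).Nonempty := by
  rw [dist, ENat.toNat_eq_iff two_ne_zero]
  exact edist_eq_two_iff

variable {α β : Type*}

@[simp]
lemma completeBipartiteGraph_dist_inl_inl [Nonempty β] {i j : α} (h : i ≠ j) :
    (completeBipartiteGraph α β).dist (.inl i) (.inl j) = 2 :=
  dist_eq_two_iff.mpr
    ⟨by simpa, by simp, ⟨.inr (Classical.arbitrary β), by simp [mem_commonNeighbors]⟩⟩

@[simp]
lemma completeBipartiteGraph_dist_inr_inr [Nonempty α] {i j : β} (h : i ≠ j) :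
    (completeBipartiteGraph α β).dist (.inr i) (.inr j) = 2 :=
  dist_eq_two_iff.mpr
    ⟨by simpa, by simp, ⟨.inl (Classical.arbitrary α), by simp [mem_commonNeighbors]⟩⟩

@[simp]
lemma completeBipartiteGraph_dist_inl_inr (i : α) (j : β) :
    (completeBipartiteGraph α β).dist (.inl i) (.inr j) = 1 :=
  dist_eq_one_iff_adj.mpr (by simp)

@[simp]
lemma completeBipartiteGraph_dist_inr_inl (i : β) (j : α) :
    (completeBipartiteGraph α β).dist (.inr i) (.inl j) = 1 :=
  dist_eq_one_iff_adj.mpr (by simp)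

end SimpleGraph

section CompleteBipartite

variable (α β : Type*) [Fintype α] [Fintype β]

def partIndicator : Matrix (α ⊕ β) (Fin 2) ℝ :=
  of (Sum.elim (fun _ => ![1, 0]) (fun _ => ![0, 1]))

lemma partIndicator_transpose_mul_self :
    (partIndicator α β)ᵀ * partIndicator α β
      = diagonal ![(Fintype.card α : ℝ), Fintype.card β] := by
  ext i j
  fin_cases i <;> fin_cases j <;> simp [partIndicator, mul_apply, Fintype.sum_sum_type]

variable [DecidableEq α] [DecidableEq β] [Nonempty α] [Nonempty β]

lemma distMatrix_completeBipartiteGraph :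
    distMatrix (completeBipartiteGraph α β)
      = partIndicator α β * !![(2 : ℝ), 1; 1, 2] * (partIndicator α β)ᵀ - scalar _ 2 := by
  ext (i | i) (j | j)
  · by_cases h : i = j <;> simp [distMatrix, partIndicator, mul_apply, h]
  · simp [distMatrix, partIndicator, mul_apply]
  · simp [distMatrix, partIndicator, mul_apply]
  · by_cases h : i = j <;> simp [distMatrix, partIndicator, mul_apply, h]

lemma charpoly_distMatrix_completeBipartiteGraph :
    (distMatrix (completeBipartiteGraph α β)).charpoly =
      (X + C 2) ^ (Fintype.card (α ⊕ β) - 2) *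
        ((X + C 2) ^ 2 - C (2 * (Fintype.card (α ⊕ β) : ℝ)) * (X + C 2)
          + C (3 * (Fintype.card α : ℝ) * Fintype.card β)) := by
  set p : ℝ := (Fintype.card α : ℝ)
  set q : ℝ := (Fintype.card β : ℝ)
  have hquotient : (!![(2 : ℝ), 1; 1, 2] * diagonal ![p, q]).charpoly
      = X ^ 2 - C (2 * (p + q)) * X + C (3 * p * q) := by
    have hM : !![(2 : ℝ), 1; 1, 2] * diagonal ![p, q] = !![2 * p, q; p, 2 * q] := by
      ext i j
      fin_cases i <;> fin_cases j <;> simp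
    rw [hM, charpoly_fin_two, trace_fin_two_of, det_fin_two_of,
      show 2 * p + 2 * q = 2 * (p + q) by ring, show 2 * p * (2 * q) - q * p = 3 * p * q by ring]
  have hcard : Fintype.card (Fin 2) ≤ Fintype.card (α ⊕ β) := by
    have := Fintype.card_pos (α := α)
    have := Fintype.card_pos (α := β)
    simp only [Fintype.card_fin, Fintype.card_sum]
    omega
  rw [distMatrix_completeBipartiteGraph, charpoly_sub_scalar, Matrix.mul_assoc,
    charpoly_mul_comm_of_le (partIndicator α β) _ hcard, Matrix.mul_assoc,
    partIndicator_transpose_mul_self, hquotient]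
  simp [p, q]

theorem eigenvalues_distMatrix_completeBipartiteGraph :
    Multiset.map (distMatrix_isHermitian (completeBipartiteGraph α β)).eigenvalues univ.val =
      Multiset.replicate (Fintype.card (α ⊕ β) - 2) (-2 : ℝ) +
        {(Fintype.card (α ⊕ β) : ℝ) - 2 +
            √((Fintype.card (α ⊕ β) : ℝ) ^ 2 - 3 * Fintype.card α * Fintype.card β),
          (Fintype.card (α ⊕ β) : ℝ) - 2 -
            √((Fintype.card (α ⊕ β) : ℝ) ^ 2 - 3 * Fintype.card α * Fintype.card β)} := by
  set k := Fintype.card (α ⊕ β) - 2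
  set n : ℝ := (Fintype.card (α ⊕ β) : ℝ)
  set s := √(n ^ 2 - 3 * Fintype.card α * Fintype.card β)
  have hs : s ^ 2 = n ^ 2 - 3 * Fintype.card α * Fintype.card β := by
    have hn : n = Fintype.card α + Fintype.card β := by simp [n]
    exact Real.sq_sqrt (by nlinarith [sq_nonneg ((Fintype.card α : ℝ) - Fintype.card β)])
  have hfactor : (X + C 2) ^ k *
      ((X + C 2) ^ 2 - C (2 * n) * (X + C 2) + C (3 * (Fintype.card α : ℝ) * Fintype.card β))
      = (X - C (-2)) ^ k * ((X - C (n - 2 + s)) * (X - C (n - 2 - s))) := by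
    have hsC := congrArg C hs
    simp only [map_sub, map_mul, map_pow, map_add, map_neg, map_natCast, map_ofNat] at hsC ⊢
    linear_combination (X + 2) ^ k * hsC
  have hroots := (distMatrix_isHermitian (completeBipartiteGraph α β)).roots_charpoly_eq_eigenvalues
  simp only [RCLike.ofReal_real_eq_id, Function.id_comp] at hroots
  rw [← hroots, charpoly_distMatrix_completeBipartiteGraph, hfactor,
    roots_X_sub_C_pow_mul_X_sub_C_mul_X_sub_C]

end CompleteBipartite

theorem stmt8 (a b : ℕ) (ha : 1 ≤ a) (hb : 1 ≤ b) (n : ℕ) (hn : n = a + b) :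
    Multiset.map (distMatrix_isHermitian (completeBipartiteGraph (Fin a) (Fin b))).eigenvalues
        Finset.univ.val =
      Multiset.replicate (n - 2) (-2 : ℝ) +
        {(n : ℝ) - 2 + Real.sqrt ((n : ℝ)^2 - 3*a*b),
         (n : ℝ) - 2 - Real.sqrt ((n : ℝ)^2 - 3*a*b)} := by
  have : Nonempty (Fin a) := ⟨⟨0, ha⟩⟩
  have : Nonempty (Fin b) := ⟨⟨0, hb⟩⟩
  have hcard : Fintype.card (Fin a ⊕ Fin b) = n := by simp [hn]
  simpa [hcard] using eigenvalues_distMatrix_completeBipartiteGraph (Fin a) (Fin b)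
end

section
/- Let G be a connected simple graph on n vertices with Wiener index W and clique number ω satisfying 2 ≤ ω ≤ n−1. Let U ⊆ V(G) be any clique of G with |U| = ω, and set s = Σ_{v∈U} Tr_G(v), a = nω(1−ω) + 4ω(s − W) − ns, and b = 4Wω(ω−1) + 4s(W−s). Then the largest distance signless Laplacian eigenvalue satisfies q^𝒟(G) ≥ (−a + √(a² − 4b(n−ω)ω)) / (2(n−ω)ω). -/
open Finset Matrix

/-!
Test the Rayleigh quotient of `Q = distSLMatrix G` on vectors equal to `α` on the clique `U`
and to `β` off it. Distances inside `U` are all `1`, so `xᵀQx` is a binary quadratic form in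
`(α, β)` whose coefficients are determined by `ω`, `s` and `W`, while
`xᵀx = ωα² + (n - ω)β²`. Comparing the two forms for all `(α, β)` bounds `q^𝒟(G)` below by
the larger root of the resulting `2 × 2` determinant.
-/

namespace Matrix

variable {V : Type*} [Fintype V] [DecidableEq V]

theorem IsHermitian.dotProduct_mulVec_le_maxEig {A : Matrix V V ℝ} (hA : A.IsHermitian)
    (x : V → ℝ) : x ⬝ᵥ (A *ᵥ x) ≤ maxEig hA * (x ⬝ᵥ x) := by
  set P : Matrix V V ℝ := (hA.eigenvectorUnitary : Matrix V V ℝ)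
  set y := Pᵀ *ᵥ x
  have hPPt : P * Pᵀ = 1 := mem_unitaryGroup_iff.mp hA.eigenvectorUnitary.2
  have hxP : ∀ z, x ⬝ᵥ (P *ᵥ z) = y ⬝ᵥ z := fun z => by
    rw [dotProduct_mulVec, ← mulVec_transpose]
  have hxx : x ⬝ᵥ x = y ⬝ᵥ y := by
    rw [← hxP, mulVec_mulVec, hPPt, one_mulVec]
  have hAx : x ⬝ᵥ (A *ᵥ x) = ∑ i, hA.eigenvalues i * (y i * y i) := by
    conv_lhs => rw [hA.spectral_theorem, Unitary.conjStarAlgAut_apply]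
    have hstar : star P = Pᵀ := by
      rw [star_eq_conjTranspose, conjTranspose_eq_transpose_of_trivial]
    rw [← mulVec_mulVec, ← mulVec_mulVec, hxP, hstar]
    simp only [dotProduct, mulVec_diagonal, Function.comp_apply, RCLike.ofReal_real_eq_id, id]
    exact Finset.sum_congr rfl fun i _ => by ring
  rw [hAx, hxx, dotProduct, Finset.mul_sum]
  gcongr with i
  · exact mul_self_nonneg _
  · exact le_ciSup (Set.finite_range _).bddAbove i

theorem piecewise_dotProduct_mulVec_piecewise (M : Matrix V V ℝ) (U : Finset V) (α β : ℝ) :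
    U.piecewise (fun _ ↦ α) (fun _ ↦ β) ⬝ᵥ (M *ᵥ U.piecewise (fun _ ↦ α) (fun _ ↦ β)) =
      α * α * ∑ v ∈ U, ∑ u ∈ U, M v u + α * β * ∑ v ∈ U, ∑ u ∈ Uᶜ, M v u +
        β * α * ∑ v ∈ Uᶜ, ∑ u ∈ U, M v u + β * β * ∑ v ∈ Uᶜ, ∑ u ∈ Uᶜ, M v u := by
  have hα : ∀ v ∈ U, U.piecewise (fun _ ↦ α) (fun _ ↦ β) v = α :=
    fun v hv => Finset.piecewise_eq_of_mem _ _ _ hv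
  have hβ : ∀ v ∈ Uᶜ, U.piecewise (fun _ ↦ α) (fun _ ↦ β) v = β :=
    fun v hv => Finset.piecewise_eq_of_notMem _ _ _ (Finset.mem_compl.mp hv)
  simp +contextual only [dotProduct, mulVec, ← Finset.sum_add_sum_compl U, hα, hβ]
  simp only [mul_add, Finset.sum_add_distrib, ← Finset.sum_mul, ← Finset.mul_sum]
  ring

omit [Fintype V] in
theorem sum_sum_diagonal (d : V → ℝ) (S T : Finset V) :
    ∑ v ∈ S, ∑ u ∈ T, diagonal d v u = ∑ v ∈ S ∩ T, d v := by
  simp only [diagonal_apply, Finset.sum_ite_eq, Finset.sum_ite_mem]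

end Matrix

theorem Finset.piecewise_dotProduct_piecewise {V : Type*} [Fintype V] [DecidableEq V]
    (U : Finset V) (α β : ℝ) :
    U.piecewise (fun _ ↦ α) (fun _ ↦ β) ⬝ᵥ U.piecewise (fun _ ↦ α) (fun _ ↦ β) =
      #U * α ^ 2 + #Uᶜ * β ^ 2 := by
  have h := Matrix.piecewise_dotProduct_mulVec_piecewise (1 : Matrix V V ℝ) U α β
  rw [one_mulVec, ← diagonal_one] at h
  simp only [Matrix.sum_sum_diagonal, Finset.inter_self, Finset.inter_comm Uᶜ U,
    Finset.inter_compl, Finset.sum_const, nsmul_one, Finset.card_empty,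
    Nat.cast_zero] at h
  rw [h]
  ring

namespace SimpleGraph

variable {V : Type*} {G : SimpleGraph V}

theorem IsNClique.sum_sum_dist {k : ℕ} {U : Finset V} (h : G.IsNClique k U) :
    ∑ v ∈ U, ∑ u ∈ U, (G.dist v u : ℝ) = k * (k - 1) := by
  classical
  have hrow : ∀ v ∈ U, ∑ u ∈ U, (G.dist v u : ℝ) + 1 = k := fun v hv => by
    rw [← Finset.sum_erase U (by simp : (G.dist v v : ℝ) = 0),
      Finset.sum_congr rfl fun u hu => by
        rw [dist_eq_one_iff_adj.mpr (h.1 hv (Finset.mem_of_mem_erase hu)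
          (Finset.ne_of_mem_erase hu).symm)]]
    rw [← h.card_eq, ← Finset.card_erase_add_one hv]
    simp
  rw [Finset.sum_congr rfl fun v hv => eq_sub_of_add_eq (hrow v hv), Finset.sum_const,
    h.card_eq, nsmul_eq_mul]

theorem sum_sum_dist_comm (G : SimpleGraph V) (S T : Finset V) :
    ∑ v ∈ S, ∑ u ∈ T, (G.dist v u : ℝ) = ∑ v ∈ T, ∑ u ∈ S, (G.dist v u : ℝ) := by
  rw [Finset.sum_comm]
  simp only [dist_comm]

theorem sum_transmission_eq_add_compl [Fintype V] [DecidableEq V] (G : SimpleGraph V)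
    (S U : Finset V) :
    ∑ v ∈ S, transmission G v =
      ∑ v ∈ S, ∑ u ∈ U, (G.dist v u : ℝ) + ∑ v ∈ S, ∑ u ∈ Uᶜ, (G.dist v u : ℝ) := by
  simp only [transmission, ← Finset.sum_add_distrib, Finset.sum_add_sum_compl]

theorem IsNClique.piecewise_dotProduct_distSLMatrix_mulVec [Fintype V] [DecidableEq V] {k : ℕ}
    {U : Finset V} (h : G.IsNClique k U) (α β : ℝ) :
    U.piecewise (fun _ ↦ α) (fun _ ↦ β) ⬝ᵥ
        (distSLMatrix G *ᵥ U.piecewise (fun _ ↦ α) (fun _ ↦ β)) =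
      (∑ v ∈ U, transmission G v + k * (k - 1)) * α ^ 2 +
        2 * (∑ v ∈ U, transmission G v - k * (k - 1)) * α * β +
        (2 * ∑ v, transmission G v - 3 * ∑ v ∈ U, transmission G v + k * (k - 1)) * β ^ 2 := by
  rw [Matrix.piecewise_dotProduct_mulVec_piecewise]
  simp only [distSLMatrix, distMatrix, Matrix.add_apply, Matrix.of_apply,
    Finset.sum_add_distrib, Matrix.sum_sum_diagonal, Finset.inter_self, Finset.inter_compl,
    Finset.inter_comm Uᶜ U, Finset.sum_empty, zero_add]
  have hUU := h.sum_sum_dist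
  have hU := G.sum_transmission_eq_add_compl U U
  have hUc := G.sum_transmission_eq_add_compl Uᶜ U
  have hsymm := G.sum_sum_dist_comm U Uᶜ
  have htotal := Finset.sum_add_sum_compl U (transmission G)
  linear_combination (α ^ 2 - 2 * α * β + β ^ 2) * hUU + (β ^ 2 - 2 * α * β) * hU +
    (β ^ 2 - α * β) * hsymm - β ^ 2 * hUc + 2 * β ^ 2 * htotal

end SimpleGraph

-- The left side is the larger root of `det (q • diagonal ![p, r] - !![A, B; B, C]) = 0`.
theorem le_of_forall_quadForm_le {p r A B C q : ℝ} (hp : 0 < p) (hr : 0 < r)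
    (h : ∀ x y : ℝ, A * x ^ 2 + 2 * B * x * y + C * y ^ 2 ≤ q * (p * x ^ 2 + r * y ^ 2)) :
    (p * C + r * A + √((p * C + r * A) ^ 2 - 4 * p * r * (A * C - B ^ 2))) / (2 * p * r) ≤
      q := by
  have hA : 0 ≤ q * p - A := by linarith [h 1 0]
  have hC : 0 ≤ q * r - C := by linarith [h 0 1]
  have hB : B ^ 2 ≤ (q * p - A) * (q * r - C) := by
    have hdisc := discrim_le_zero (a := q * p - A) (b := -2 * B) (c := q * r - C)
      fun t => by linarith [h t 1]
    rw [discrim] at hdisc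
    linarith
  have hroot : 0 ≤ q * (2 * p * r) - (p * C + r * A) := by
    nlinarith [mul_nonneg hp.le hC, mul_nonneg hr.le hA]
  rw [div_le_iff₀ (by positivity), ← le_sub_iff_add_le', Real.sqrt_le_left hroot]
  nlinarith [mul_pos hp hr]

theorem stmt15_general {V : Type*} [Fintype V] [DecidableEq V] (G : SimpleGraph V)
    (n : ℕ) (hn : n = Fintype.card V)
    (W : ℝ) (hW : W = (∑ u, transmission G u) / 2)
    (ω : ℕ) (hω2 : 2 ≤ ω) (hωn : ω + 1 ≤ n)
    (U : Finset V) (hU : G.IsNClique ω U)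
    (s a b : ℝ)
    (hs : s = ∑ v ∈ U, transmission G v)
    (ha : a = n*ω*(1 - ω) + 4*ω*(s - W) - n*s)
    (hb : b = 4*W*ω*(ω - 1) + 4*s*(W - s)) :
    (-a + Real.sqrt (a^2 - 4*b*(n - ω)*ω)) / (2*((n : ℝ) - ω)*ω) ≤
      maxEig (distSLMatrix_isHermitian G) := by
  have hω : (0 : ℝ) < ω := by exact_mod_cast (by omega : 0 < ω)
  have hnω : (0 : ℝ) < n - ω := sub_pos.mpr (by exact_mod_cast (by omega : ω < n))
  have hcard : (#Uᶜ : ℝ) = n - ω := by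
    rw [Finset.card_compl, hU.card_eq, hn, Nat.cast_sub (hn ▸ (by omega : ω ≤ n))]
  have key := le_of_forall_quadForm_le hω hnω fun α β => by
    have hRay := (distSLMatrix_isHermitian G).dotProduct_mulVec_le_maxEig
      (U.piecewise (fun _ ↦ α) (fun _ ↦ β))
    rwa [hU.piecewise_dotProduct_distSLMatrix_mulVec, Finset.piecewise_dotProduct_piecewise,
      hU.card_eq, hcard] at hRay
  have htotal : ∑ v, transmission G v = 2 * W := by rw [hW]; ring
  rw [← hs, htotal] at key
  convert key using 2
  · rw [ha, hb]
    congr 1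
    · ring
    · congr 1
      ring
  · ring

theorem stmt15 {V : Type*} [Fintype V] [DecidableEq V] (G : SimpleGraph V)
    (hconn : G.Connected)
    (n : ℕ) (hn : n = Fintype.card V)
    (W : ℝ) (hW : W = (∑ u, transmission G u) / 2)
    (ω : ℕ) (hω : G.cliqueNum = ω) (hω2 : 2 ≤ ω) (hωn : ω + 1 ≤ n)
    (U : Finset V) (hU : G.IsNClique ω U)
    (s a b : ℝ)
    (hs : s = ∑ v ∈ U, transmission G v)
    (ha : a = n*ω*(1 - ω) + 4*ω*(s - W) - n*s)
    (hb : b = 4*W*ω*(ω - 1) + 4*s*(W - s)) :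
    (-a + Real.sqrt (a^2 - 4*b*(n - ω)*ω)) / (2*((n : ℝ) - ω)*ω) ≤
      maxEig (distSLMatrix_isHermitian G) :=
  stmt15_general G n hn W hW ω hω2 hωn U hU s a b hs ha hb
end
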